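/- Let 0 < q < 1, let ν ≥ 2 be an integer, let m be an integer with 1 ≤ m ≤ ν − 1, and let s ∈ ℂ with Re(s) > ν. Then ζ_q^{(ν−m)}(s) = Σ_{l=0}^m (−1)^l·C(m,l)·(1−q)^l·ζ_q^{(ν−l)}(s−l), where all the series involved converge absolutely. In particular (m = 1), ζ_q^{(ν)}(s) = ζ_q^{(ν−1)}(s) + (1−q)·ζ_q^{(ν−1)}(s−1). -/

import Mathlib

open Complex

/-- the term of index `n+1` of the series defining `ζ_q^{(μ)}(s) = Σ_{n≥1} q^{n(s−μ)}·[n]_q^{−s}`,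
where `[n]_q = (1 − q^n)/(1 − q)` is a positive real and `[n]_q^{−s} := exp(−s · ln [n]_q)`. -/
noncomputable def zqTerm (q : ℝ) (μ : ℕ) (s : ℂ) (n : ℕ) : ℂ :=
  Complex.exp ((((n : ℂ) + 1) * (s - (μ : ℂ))) * Real.log q) *
    Complex.exp (-s * Real.log ((1 - q ^ (n + 1)) / (1 - q)))

/-- `ζ_q^{(μ)}(s)`. -/
noncomputable def zq (q : ℝ) (μ : ℕ) (s : ℂ) : ℂ := ∑' n : ℕ, zqTerm q μ s n

/-!
Put `a = [n+1]_q`, so that `q^(n+1) = 1 - (1 - q) a`. Lowering `μ` by `m` multiplies the `n`-th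
term by `q^((n+1) m) = (1 - (1 - q) a)^m`, while passing from `(ν, s)` to `(ν - l, s - l)` multiplies
it by `a^l`; the binomial theorem therefore gives the identity termwise, and since every series
involved is dominated by a convergent geometric series, it may be summed over `n`.
-/

open Finset

lemma one_le_qNumber {q : ℝ} (hq0 : 0 ≤ q) (hq1 : q < 1) (n : ℕ) :
    1 ≤ (1 - q ^ (n + 1)) / (1 - q) := by
  rw [le_div_iff₀ (by linarith)]
  linarith [pow_le_of_le_one hq0 hq1.le n.add_one_ne_zero]

lemma norm_zqTerm_le {q : ℝ} (hq0 : 0 < q) (hq1 : q < 1) (μ : ℕ) {s : ℂ} (hs : 0 ≤ s.re)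
    (n : ℕ) : ‖zqTerm q μ s n‖ ≤ (q ^ (s.re - μ)) ^ (n + 1) := by
  have hre : ((((n : ℂ) + 1) * (s - μ)) * Real.log q).re =
      ((n + 1 : ℕ) : ℝ) * (Real.log q * (s.re - μ)) := by
    simp only [mul_re, add_re, sub_re, natCast_re, one_re, ofReal_re, natCast_im, one_im,
      sub_im, ofReal_im, add_im]
    push_cast
    ring
  have hlog : 0 ≤ Real.log ((1 - q ^ (n + 1)) / (1 - q)) :=
    Real.log_nonneg (one_le_qNumber hq0.le hq1 n)
  rw [zqTerm, norm_mul, norm_exp, norm_exp, hre, Real.rpow_def_of_pos hq0, ← Real.exp_nat_mul]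
  refine mul_le_of_le_one_right (Real.exp_pos _).le (Real.exp_le_one_iff.2 ?_)
  simpa using mul_nonneg hs hlog

lemma summable_norm_zqTerm {q : ℝ} (hq0 : 0 < q) (hq1 : q < 1) {μ : ℕ} {s : ℂ}
    (hs : (μ : ℝ) < s.re) : Summable fun n ↦ ‖zqTerm q μ s n‖ := by
  have hr : q ^ (s.re - μ) < 1 := Real.rpow_lt_one hq0.le hq1 (by linarith)
  refine .of_nonneg_of_le (fun n ↦ norm_nonneg _)
    (norm_zqTerm_le hq0 hq1 μ (by linarith [μ.cast_nonneg (α := ℝ)])) ?_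
  exact (summable_nat_add_iff 1).2 (summable_geometric_of_lt_one (by positivity) hr)

lemma exp_natCast_mul_log {x : ℝ} (hx : 0 < x) (k : ℕ) :
    exp (k * Real.log x) = (x : ℂ) ^ k := by
  rw [exp_nat_mul, ← ofReal_exp, Real.exp_log hx]

lemma zqTerm_sub_natCast {q : ℝ} (hq0 : 0 ≤ q) (hq1 : q < 1) (μ l : ℕ) (s : ℂ) (n : ℕ) :
    zqTerm q μ (s - l) n =
      zqTerm q (μ + l) s n * (((1 - q ^ (n + 1)) / (1 - q) : ℝ) : ℂ) ^ l := by
  have ha := zero_lt_one.trans_le (one_le_qNumber hq0 hq1 n)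
  rw [zqTerm, zqTerm, ← exp_natCast_mul_log ha, ← exp_add, ← exp_add, ← exp_add]
  congr 1
  push_cast
  ring

lemma zqTerm_eq_mul_pow {q : ℝ} (hq0 : 0 < q) (μ m : ℕ) (s : ℂ) (n : ℕ) :
    zqTerm q μ s n = zqTerm q (μ + m) s n * ((q : ℂ) ^ (n + 1)) ^ m := by
  rw [zqTerm, zqTerm, ← pow_mul, ← exp_natCast_mul_log hq0, ← exp_add, ← exp_add, ← exp_add]
  congr 1
  push_cast
  ring

lemma zqTerm_eq_sum {q : ℝ} (hq0 : 0 < q) (hq1 : q < 1) {ν m : ℕ} (hm : m ≤ ν) (s : ℂ)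
    (n : ℕ) : zqTerm q (ν - m) s n = ∑ l ∈ range (m + 1),
      (-1) ^ l * (m.choose l : ℂ) * (1 - (q : ℂ)) ^ l * zqTerm q (ν - l) (s - l) n := by
  have hqa : (q : ℂ) ^ (n + 1) =
      -1 * (1 - q) * (((1 - q ^ (n + 1)) / (1 - q) : ℝ) : ℂ) + 1 := by
    have : (1 : ℂ) - q ≠ 0 := sub_ne_zero.2 (by exact_mod_cast hq1.ne')
    push_cast
    field_simp
    ring
  rw [zqTerm_eq_mul_pow hq0 (ν - m) m, Nat.sub_add_cancel hm, hqa, add_pow, mul_sum]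
  refine sum_congr rfl fun l hl ↦ ?_
  have hlν : l ≤ ν := (Nat.lt_succ_iff.1 (mem_range.1 hl)).trans hm
  rw [zqTerm_sub_natCast hq0.le hq1, Nat.sub_add_cancel hlν, mul_pow, mul_pow, one_pow]
  ring

lemma summable_norm_zqTerm_sub_natCast {q : ℝ} (hq0 : 0 < q) (hq1 : q < 1) {ν l : ℕ}
    (hl : l ≤ ν) {s : ℂ} (hs : (ν : ℝ) < s.re) :
    Summable fun n ↦ ‖zqTerm q (ν - l) (s - l) n‖ :=
  summable_norm_zqTerm hq0 hq1 (by rw [Nat.cast_sub hl, sub_re, natCast_re]; linarith)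

lemma zq_eq_sum {q : ℝ} (hq0 : 0 < q) (hq1 : q < 1) {ν m : ℕ} (hm : m ≤ ν) {s : ℂ}
    (hs : (ν : ℝ) < s.re) : zq q (ν - m) s = ∑ l ∈ range (m + 1),
      (-1) ^ l * (m.choose l : ℂ) * (1 - (q : ℂ)) ^ l * zq q (ν - l) (s - l) := by
  have hsummable (l) (hl : l ∈ range (m + 1)) :
      Summable fun n ↦ (-1) ^ l * (m.choose l : ℂ) * (1 - (q : ℂ)) ^ l *
        zqTerm q (ν - l) (s - l) n :=
    (summable_norm_zqTerm_sub_natCast hq0 hq1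
      ((Nat.lt_succ_iff.1 (mem_range.1 hl)).trans hm) hs).of_norm.mul_left _
  simp only [zq, ← tsum_mul_left]
  rw [← Summable.tsum_finsetSum hsummable]
  exact tsum_congr (zqTerm_eq_sum hq0 hq1 hm s)

theorem stmt19_general (q : ℝ) (hq0 : 0 < q) (hq1 : q < 1) (ν : ℕ) (hν : 2 ≤ ν)
    (m : ℕ) (hm2 : m ≤ ν - 1) (s : ℂ) (hs : (ν : ℝ) < s.re) :
    Summable (fun n : ℕ => ‖zqTerm q (ν - m) s n‖) ∧
    (∀ l ∈ Finset.range (m + 1), Summable (fun n : ℕ => ‖zqTerm q (ν - l) (s - (l : ℂ)) n‖)) ∧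
    zq q (ν - m) s =
      ∑ l ∈ Finset.range (m + 1),
        (-1) ^ l * (Nat.choose m l : ℂ) * (1 - (q : ℂ)) ^ l * zq q (ν - l) (s - (l : ℂ)) ∧
    zq q ν s = zq q (ν - 1) s + (1 - (q : ℂ)) * zq q (ν - 1) (s - 1) := by
  have hmν : m ≤ ν := hm2.trans (ν.sub_le 1)
  refine ⟨summable_norm_zqTerm hq0 hq1 ((Nat.cast_le.2 (ν.sub_le m)).trans_lt hs),
    fun l hl ↦ summable_norm_zqTerm_sub_natCast hq0 hq1
      ((Nat.lt_succ_iff.1 (mem_range.1 hl)).trans hmν) hs,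
    zq_eq_sum hq0 hq1 hmν hs, ?_⟩
  have h := zq_eq_sum hq0 hq1 (by omega : 1 ≤ ν) hs
  norm_num [sum_range_succ] at h
  linear_combination -h

theorem stmt19 (q : ℝ) (hq0 : 0 < q) (hq1 : q < 1) (ν : ℕ) (hν : 2 ≤ ν)
    (m : ℕ) (hm1 : 1 ≤ m) (hm2 : m ≤ ν - 1) (s : ℂ) (hs : (ν : ℝ) < s.re) :
    Summable (fun n : ℕ => ‖zqTerm q (ν - m) s n‖) ∧
    (∀ l ∈ Finset.range (m + 1), Summable (fun n : ℕ => ‖zqTerm q (ν - l) (s - (l : ℂ)) n‖)) ∧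
    zq q (ν - m) s =
      ∑ l ∈ Finset.range (m + 1),
        (-1) ^ l * (Nat.choose m l : ℂ) * (1 - (q : ℂ)) ^ l * zq q (ν - l) (s - (l : ℂ)) ∧
    zq q ν s = zq q (ν - 1) s + (1 - (q : ℂ)) * zq q (ν - 1) (s - 1) :=
  stmt19_general q hq0 hq1 ν hν m hm2 s hs
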